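/- Fix n ≥ 0 and let g be the real Lie algebra with basis {X_{4k+1}, X_{4k+2}, X_{4k+3}, X_{4k+4} : 0 ≤ k ≤ n} ∪ {Z_1, Z_2} whose only nonzero brackets among basis elements are [X_{4k+1}, X_{4k+3}] = −Z_1/2, [X_{4k+1}, X_{4k+4}] = −Z_2/2, [X_{4k+2}, X_{4k+3}] = −Z_2/2, [X_{4k+2}, X_{4k+4}] = Z_1/2. In g_ℂ set W = (Z_1 + iZ_2)/2, W̄ = (Z_1 − iZ_2)/2, T_{2k+1} = (X_{4k+1} − iX_{4k+2})/2, T_{2k+2} = (X_{4k+3} + iX_{4k+4})/2, T̄_{2k+1} = (X_{4k+1} + iX_{4k+2})/2, T̄_{2k+2} = (X_{4k+3} − iX_{4k+4})/2, forming a ℂ-basis of g_ℂ. Let ρ be the functional with ρ(W) = 1 and ρ = 0 on the other basis elements, and ρ̄ the functional with ρ̄(W̄) = 1 and ρ̄ = 0 on the other basis elements. Let m = span_ℂ{T_1, …, T_{2n+2}} and n̄ = span_ℂ{T̄_1, …, T̄_{2n+2}}, and define Φ_ρ, Φ_ρ̄ : m → Hom_ℂ(n̄, ℂ) by Φ_ρ(T)(S)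 = ρ([T, S]) and Φ_ρ̄(T)(S) = ρ̄([T, S]). Then the images of Φ_ρ and Φ_ρ̄ are transversal: image(Φ_ρ) ∩ image(Φ_ρ̄) = {0}. -/

import Mathlib

/-! **Statement 14.** In the complexification of the algebra `W_{4n+6}` of Example 3,
the images of the contractions `Φ_ρ` and `Φ_ρ̄` of `dρ` and `dρ̄` are transversal. -/

namespace ExampleThreeComplex

noncomputable section

/-- The complexification `g_ℂ` of the algebra of Example 3: for each `0 ≤ k ≤ n`
the four complex coordinates of `X_{4k+1}, …, X_{4k+4}`, plus those of `Z_1, Z_2`. -/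
abbrev Gc (n : ℕ) := (Fin (n + 1) → ℂ × ℂ × ℂ × ℂ) × ℂ × ℂ

/-- The standard basis of `ℂ × ℂ × ℂ × ℂ`. -/
def e : Fin 4 → ℂ × ℂ × ℂ × ℂ := ![(1, 0, 0, 0), (0, 1, 0, 0), (0, 0, 1, 0), (0, 0, 0, 1)]

/-- The basis vector `X_{4k+1+i}` (for `i : Fin 4`). -/
def X {n : ℕ} (k : Fin (n + 1)) (i : Fin 4) : Gc n := (Pi.single k (e i), 0, 0)

/-- The basis vector `Z_1`. -/
def Z1 {n : ℕ} : Gc n := (0, 1, 0)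

/-- The basis vector `Z_2`. -/
def Z2 {n : ℕ} : Gc n := (0, 0, 1)

/-- Coefficients of `Z_1` in the brackets `[X_{4k+1+i}, X_{4k+1+j}]`. -/
def c : Matrix (Fin 4) (Fin 4) ℂ :=
  !![0, 0, -(1 / 2), 0; 0, 0, 0, 1 / 2; 1 / 2, 0, 0, 0; 0, -(1 / 2), 0, 0]

/-- Coefficients of `Z_2` in the brackets `[X_{4k+1+i}, X_{4k+1+j}]`. -/
def d : Matrix (Fin 4) (Fin 4) ℂ :=
  !![0, 0, 0, -(1 / 2); 0, 0, -(1 / 2), 0; 0, 1 / 2, 0, 0; 1 / 2, 0, 0, 0]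

/-- `W = (Z_1 + iZ_2)/2`. -/
def W {n : ℕ} : Gc n := (0, 1 / 2, Complex.I / 2)
/-- `W̄ = (Z_1 - iZ_2)/2`. -/
def Wb {n : ℕ} : Gc n := (0, 1 / 2, -(Complex.I / 2))
/-- `T_{2k+1} = (X_{4k+1} - iX_{4k+2})/2`. -/
def Todd {n : ℕ} (k : Fin (n + 1)) : Gc n :=
  (Pi.single k (1 / 2, -(Complex.I / 2), 0, 0), 0, 0)
/-- `T_{2k+2} = (X_{4k+3} + iX_{4k+4})/2`. -/
def Teven {n : ℕ} (k : Fin (n + 1)) : Gc n :=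
  (Pi.single k (0, 0, 1 / 2, Complex.I / 2), 0, 0)
/-- `T̄_{2k+1} = (X_{4k+1} + iX_{4k+2})/2`. -/
def Tbodd {n : ℕ} (k : Fin (n + 1)) : Gc n :=
  (Pi.single k (1 / 2, Complex.I / 2, 0, 0), 0, 0)
/-- `T̄_{2k+2} = (X_{4k+3} - iX_{4k+4})/2`. -/
def Tbeven {n : ℕ} (k : Fin (n + 1)) : Gc n :=
  (Pi.single k (0, 0, 1 / 2, -(Complex.I / 2)), 0, 0)

/-- The span `m` of the `(1,0)`-vectors `T_1, …, T_{2n+2}`. -/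
def M (n : ℕ) : Submodule ℂ (Gc n) :=
  Submodule.span ℂ (Set.range (Todd (n := n)) ∪ Set.range Teven)

/-- The span `n̄` of the `(0,1)`-vectors `T̄_1, …, T̄_{2n+2}`. -/
def N (n : ℕ) : Submodule ℂ (Gc n) :=
  Submodule.span ℂ (Set.range (Tbodd (n := n)) ∪ Set.range Tbeven)

end

end ExampleThreeComplex

/-! Within each block, `⁅T_{2k+1}, T̄_{2k+2}⁆ = -W̄/2` and `⁅T_{2k+2}, T̄_{2k+1}⁆ = W/2`, and all
other brackets of `m` with `n̄` vanish. Hence `⁅m, T̄_{2l+2}⁆ ⊆ ℂ W̄` is killed by `ρ` and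
`⁅m, T̄_{2l+1}⁆ ⊆ ℂ W` by `ρ̄`: every `Φ_ρ T` vanishes on the even half and every `Φ_ρ̄ T` on the
odd half of the basis of `n̄`, so a functional in both images vanishes on all of `n̄`. -/

namespace LinearMap

variable {R M₁ M₂ Q P : Type*} [CommSemiring R] [AddCommMonoid M₁] [Module R M₁]
  [AddCommMonoid M₂] [Module R M₂] [AddCommMonoid Q] [Module R Q] [AddCommMonoid P] [Module R P]

theorem range_inf_range_eq_bot_of_apply_eq_zero {s t : Set Q}
    (hst : Submodule.span R (s ∪ t) = ⊤) (f : M₁ →ₗ[R] Q →ₗ[R] P) (g : M₂ →ₗ[R] Q →ₗ[R] P)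
    (hf : ∀ u, ∀ v ∈ t, f u v = 0) (hg : ∀ u, ∀ v ∈ s, g u v = 0) :
    range f ⊓ range g = ⊥ := by
  rw [eq_bot_iff]
  rintro φ ⟨⟨u, rfl⟩, u', hu'⟩
  refine (Submodule.mem_bot R).2 (ext_on hst fun v hv => ?_)
  rcases hv with hs | ht
  · rw [← hu']
    exact hg u' v hs
  · exact hf u v ht

end LinearMap

namespace ExampleThreeComplex

theorem Todd_eq_X {n : ℕ} (k : Fin (n + 1)) :
    Todd k = (1 / 2 : ℂ) • X k 0 - (Complex.I / 2) • X k 1 := by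
  simp [Todd, X, e, ← Pi.single_smul, ← Pi.single_sub]

theorem Teven_eq_X {n : ℕ} (k : Fin (n + 1)) :
    Teven k = (1 / 2 : ℂ) • X k 2 + (Complex.I / 2) • X k 3 := by
  simp [Teven, X, e, ← Pi.single_smul, ← Pi.single_add]

theorem Tbodd_eq_X {n : ℕ} (k : Fin (n + 1)) :
    Tbodd k = (1 / 2 : ℂ) • X k 0 + (Complex.I / 2) • X k 1 := by
  simp [Tbodd, X, e, ← Pi.single_smul, ← Pi.single_add]

theorem Tbeven_eq_X {n : ℕ} (k : Fin (n + 1)) :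
    Tbeven k = (1 / 2 : ℂ) • X k 2 - (Complex.I / 2) • X k 3 := by
  simp [Tbeven, X, e, ← Pi.single_smul, ← Pi.single_sub]

def IsExampleBracket {n : ℕ} (B : Gc n →ₗ[ℂ] Gc n →ₗ[ℂ] Gc n) : Prop :=
  ∀ (k l : Fin (n + 1)) (i j : Fin 4),
    B (X k i) (X l j) = if k = l then c i j • Z1 + d i j • Z2 else 0

section Bracket

variable {n : ℕ} {B : Gc n →ₗ[ℂ] Gc n →ₗ[ℂ] Gc n}

theorem bracket_Todd_Tbeven (hB : IsExampleBracket B) (k l : Fin (n + 1)) :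
    B (Todd k) (Tbeven l) = if k = l then -(1 / 2 : ℂ) • Wb else 0 := by
  simp only [Todd_eq_X, Tbeven_eq_X, map_sub, map_smul, LinearMap.sub_apply, 
    LinearMap.smul_apply, hB k l]
  split_ifs
  · simp [c, d, Wb, Z1, Z2, Prod.ext_iff]
    ring_nf
    norm_num
  · simp

theorem bracket_Teven_Tbeven (hB : IsExampleBracket B) (k l : Fin (n + 1)) :
    B (Teven k) (Tbeven l) = 0 := by
  simp only [Teven_eq_X, Tbeven_eq_X, map_sub, map_add, map_smul, LinearMap.add_apply, 
    LinearMap.smul_apply, hB k l]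
  split_ifs <;> simp [c, d]

theorem bracket_Todd_Tbodd (hB : IsExampleBracket B) (k l : Fin (n + 1)) :
    B (Todd k) (Tbodd l) = 0 := by
  simp only [Todd_eq_X, Tbodd_eq_X, map_sub, map_add, map_smul, LinearMap.sub_apply, 
    LinearMap.smul_apply, hB k l]
  split_ifs <;> simp [c, d]

theorem bracket_Teven_Tbodd (hB : IsExampleBracket B) (k l : Fin (n + 1)) :
    B (Teven k) (Tbodd l) = if k = l then (1 / 2 : ℂ) • W else 0 := by
  simp only [Teven_eq_X, Tbodd_eq_X, map_add, map_smul, LinearMap.add_apply, 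
    LinearMap.smul_apply, hB k l]
  split_ifs
  · simp [c, d, W, Z1, Z2, Prod.ext_iff]
    ring_nf
    norm_num
  · simp

theorem bracket_Tbeven_mem_span_Wb (hB : IsExampleBracket B) {u : Gc n} (hu : u ∈ M n)
    (l : Fin (n + 1)) : B u (Tbeven l) ∈ ℂ ∙ (Wb : Gc n) := by
  suffices M n ≤ (ℂ ∙ (Wb : Gc n)).comap (B.flip (Tbeven l)) from this hu
  refine Submodule.span_le.2 ?_
  rintro _ (⟨k, rfl⟩ | ⟨k, rfl⟩)
  · simp only [SetLike.mem_coe, Submodule.mem_comap, LinearMap.flip_apply, bracket_Todd_Tbeven hB]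
    split_ifs
    exacts [Submodule.smul_mem _ _ (Submodule.mem_span_singleton_self _), zero_mem _]
  · simp [bracket_Teven_Tbeven hB]

theorem bracket_Tbodd_mem_span_W (hB : IsExampleBracket B) {u : Gc n} (hu : u ∈ M n)
    (l : Fin (n + 1)) : B u (Tbodd l) ∈ ℂ ∙ (W : Gc n) := by
  suffices M n ≤ (ℂ ∙ (W : Gc n)).comap (B.flip (Tbodd l)) from this hu
  refine Submodule.span_le.2 ?_
  rintro _ (⟨k, rfl⟩ | ⟨k, rfl⟩)
  · simp [bracket_Todd_Tbodd hB]
  · simp only [SetLike.mem_coe, Submodule.mem_comap, LinearMap.flip_apply, bracket_Teven_Tbodd hB]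
    split_ifs
    exacts [Submodule.smul_mem _ _ (Submodule.mem_span_singleton_self _), zero_mem _]

theorem span_coe_preimage_N_eq_top :
    Submodule.span ℂ
      ((Subtype.val : N n → Gc n) ⁻¹' Set.range Tbodd ∪ Subtype.val ⁻¹' Set.range Tbeven) = ⊤ := by
  rw [← Set.preimage_union]
  exact Submodule.span_span_coe_preimage

end Bracket

theorem images_transversal_general
    (n : ℕ)
    (B : Gc n →ₗ[ℂ] Gc n →ₗ[ℂ] Gc n)
    (hXX : ∀ (k l : Fin (n + 1)) (i j : Fin 4),
      B (X k i) (X l j) = if k = l then c i j • Z1 + d i j • Z2 else 0)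
    (ρ : Gc n →ₗ[ℂ] ℂ)
    (hρWb : ρ Wb = 0)
    (ρb : Gc n →ₗ[ℂ] ℂ)
    (hρbW : ρb W = 0)
    (Φρ Φρb : M n →ₗ[ℂ] (N n →ₗ[ℂ] ℂ))
    (hΦρ : ∀ (u : M n) (v : N n), Φρ u v = ρ (B (u : Gc n) (v : Gc n)))
    (hΦρb : ∀ (u : M n) (v : N n), Φρb u v = ρb (B (u : Gc n) (v : Gc n))) :
    LinearMap.range Φρ ⊓ LinearMap.range Φρb = ⊥ := by
  refine LinearMap.range_inf_range_eq_bot_of_apply_eq_zero span_coe_preimage_N_eq_top Φρ Φρb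
    ?_ ?_
  · rintro u v ⟨l, hl⟩
    obtain ⟨a, ha⟩ := Submodule.mem_span_singleton.1 (bracket_Tbeven_mem_span_Wb hXX u.2 l)
    rw [hΦρ, ← hl, ← ha, map_smul, hρWb, smul_zero]
  · rintro u v ⟨l, hl⟩
    obtain ⟨a, ha⟩ := Submodule.mem_span_singleton.1 (bracket_Tbodd_mem_span_W hXX u.2 l)
    rw [hΦρb, ← hl, ← ha, map_smul, hρbW, smul_zero]

/-- Let `B` be the ℂ-bilinear extension of the bracket of Example 3 to `g_ℂ`, let
`ρ` and `ρ̄` be the functionals with `ρ W = 1`, `ρ̄ W̄ = 1`, vanishing on the other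
elements of the ℂ-basis `{W, W̄, T_j, T̄_j}`, and let
`Φ_ρ, Φ_ρ̄ : m → Hom_ℂ(n̄, ℂ)` be the linear maps `Φ_ρ T = (S ↦ ρ ⁅T, S⁆)` and
`Φ_ρ̄ T = (S ↦ ρ̄ ⁅T, S⁆)`, where `m = span_ℂ {T_1, …, T_{2n+2}}` and
`n̄ = span_ℂ {T̄_1, …, T̄_{2n+2}}`.  Then the images of `Φ_ρ` and `Φ_ρ̄` are
transversal: `image Φ_ρ ⊓ image Φ_ρ̄ = ⊥`. -/
theorem images_transversal
    (n : ℕ)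
    (B : Gc n →ₗ[ℂ] Gc n →ₗ[ℂ] Gc n)
    (hXX : ∀ (k l : Fin (n + 1)) (i j : Fin 4),
      B (X k i) (X l j) = if k = l then c i j • Z1 + d i j • Z2 else 0)
    (hZ1 : ∀ (k : Fin (n + 1)) (i : Fin 4), B (X k i) Z1 = 0 ∧ B Z1 (X k i) = 0)
    (hZ2 : ∀ (k : Fin (n + 1)) (i : Fin 4), B (X k i) Z2 = 0 ∧ B Z2 (X k i) = 0)
    (hZZ : B (Z1 : Gc n) Z1 = 0 ∧ B (Z1 : Gc n) Z2 = 0 ∧ B (Z2 : Gc n) Z1 = 0 ∧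
      B (Z2 : Gc n) Z2 = 0)
    (ρ : Gc n →ₗ[ℂ] ℂ)
    (hρW : ρ W = 1) (hρWb : ρ Wb = 0)
    (hρT : ∀ k, ρ (Todd k) = 0 ∧ ρ (Teven k) = 0 ∧ ρ (Tbodd k) = 0 ∧ ρ (Tbeven k) = 0)
    (ρb : Gc n →ₗ[ℂ] ℂ)
    (hρbWb : ρb Wb = 1) (hρbW : ρb W = 0)
    (hρbT : ∀ k, ρb (Todd k) = 0 ∧ ρb (Teven k) = 0 ∧ ρb (Tbodd k) = 0 ∧
      ρb (Tbeven k) = 0)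
    (Φρ Φρb : M n →ₗ[ℂ] (N n →ₗ[ℂ] ℂ))
    (hΦρ : ∀ (u : M n) (v : N n), Φρ u v = ρ (B (u : Gc n) (v : Gc n)))
    (hΦρb : ∀ (u : M n) (v : N n), Φρb u v = ρb (B (u : Gc n) (v : Gc n))) :
    LinearMap.range Φρ ⊓ LinearMap.range Φρb = ⊥ :=
  images_transversal_general n B hXX ρ hρWb ρb hρbW Φρ Φρb hΦρ hΦρb

end ExampleThreeComplex
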